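/- arXiv:1808.10034 — 6 statements merged into one kernel-verified Lean document; each statement's English description precedes it below -/
import Mathlib

section
/- In the category Grphs of multigraphs with graph morphisms, a morphism f : A → B is an epimorphism if and only if its part-set function f_P : P(A) → P(B) is surjective, and f is a monomorphism if and only if f_P is injective. -/
/-- A multigraph: a vertex type, an edge type, and an incidence function
assigning to each edge an unordered pair of vertices. -/
structure Multigraph : Type 1 where
  V : Type
  E : Type
  ψ : E → Sym2 V

namespace Multigraph

/-- The part set of a multigraph: vertices together with edges. -/
abbrev Part (G : Multigraph) : Type := G.V ⊕ G.E

/-- The incidence function extended to parts: a vertex `v` is incident to `{v,v}`. -/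
def incid (G : Multigraph) : G.Part → Sym2 G.V
  | Sum.inl v => s(v, v)
  | Sum.inr e => G.ψ e

/-- A graph morphism: a function on part sets mapping vertices to vertices and
preserving incidence.  (The vertex map is recorded separately, but it is uniquely
determined by the part map.) -/
@[ext]
structure Hom (G H : Multigraph) where
  partMap : G.Part → H.Part
  vertMap : G.V → H.V
  partMap_vert : ∀ v : G.V, partMap (Sum.inl v) = Sum.inl (vertMap v)
  incid_partMap : ∀ p : G.Part, H.incid (partMap p) = (G.incid p).map vertMap

/-- The identity graph morphism. -/
def Hom.id (G : Multigraph) : Hom G G where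
  partMap := _root_.id
  vertMap := _root_.id
  partMap_vert := fun _ => rfl
  incid_partMap := fun p => by simp

/-- Composition of graph morphisms. -/
def Hom.comp {G H K : Multigraph} (g : Hom H K) (f : Hom G H) : Hom G K where
  partMap := g.partMap ∘ f.partMap
  vertMap := g.vertMap ∘ f.vertMap
  partMap_vert := fun v => by simp [f.partMap_vert, g.partMap_vert]
  incid_partMap := fun p => by
    simp [Function.comp, g.incid_partMap, f.incid_partMap, Sym2.map_map]

/-- A strict graph morphism: a graph morphism that moreover maps edges to edges. -/
@[ext]
structure StrictHom (G H : Multigraph) extends Hom G H where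
  edgeMap : G.E → H.E
  partMap_edge : ∀ e : G.E, partMap (Sum.inr e) = Sum.inr (edgeMap e)

/-- The identity strict graph morphism. -/
def StrictHom.id (G : Multigraph) : StrictHom G G where
  toHom := Hom.id G
  edgeMap := _root_.id
  partMap_edge := fun _ => rfl

/-- Composition of strict graph morphisms. -/
def StrictHom.comp {G H K : Multigraph} (g : StrictHom H K) (f : StrictHom G H) :
    StrictHom G K where
  toHom := g.toHom.comp f.toHom
  edgeMap := g.edgeMap ∘ f.edgeMap
  partMap_edge := fun e => by
    simp [Hom.comp, f.partMap_edge, g.partMap_edge]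

end Multigraph

/-!
Epimorphisms are surjective: every set of parts has a characteristic morphism into a classifying
graph (vertices `Prop`, edges carrying their endpoints and a truth value), and the characteristic
morphisms of the image of `f` and of all parts agree after composing with `f`.

Monomorphisms are injective: a part `p` with `incid p = s(x, y)` is the image of the edge of the
walking edge under a morphism sending its ends to `x` and `y`. Comparing these morphisms for two
vertices with the same image shows that a monomorphism is injective on vertices, hence
`incid p = incid q` whenever `f p = f q`; comparing them for `p` and `q` then gives `p = q`.
-/

namespace Multigraph

variable {G H K : Multigraph}

theorem Hom.partMap_injective :
    Function.Injective (Hom.partMap : Hom G H → G.Part → H.Part) := by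
  intro f g h
  have hv : f.vertMap = g.vertMap := funext fun v =>
    Sum.inl_injective <| by rw [← f.partMap_vert, ← g.partMap_vert, h]
  exact Hom.ext h hv

@[simp]
theorem Hom.comp_partMap (g : Hom H K) (f : Hom G H) :
    (g.comp f).partMap = g.partMap ∘ f.partMap :=
  rfl

def Hom.IsEpi (f : Hom G H) : Prop :=
  ∀ (K : Multigraph) (g h : Hom H K), g.comp f = h.comp f → g = h

def Hom.IsMono (f : Hom G H) : Prop :=
  ∀ (K : Multigraph) (g h : Hom K G), f.comp g = f.comp h → g = h

theorem Hom.isEpi_of_surjective (f : Hom G H) (hf : Function.Surjective f.partMap) :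
    f.IsEpi := fun _ _ _ hgh =>
  Hom.partMap_injective <| hf.injective_comp_right <| congrArg Hom.partMap hgh

theorem Hom.isMono_of_injective (f : Hom G H) (hf : Function.Injective f.partMap) :
    f.IsMono := fun _ _ _ hgh =>
  Hom.partMap_injective <| hf.comp_left <| congrArg Hom.partMap hgh

/-- Edges remember their endpoints, so that every set of parts, closed under taking endpoints
or not, has a characteristic morphism into this graph. -/
def classifier : Multigraph where
  V := Prop
  E := Sym2 Prop × Prop
  ψ := Prod.fst

def Hom.indicator (G : Multigraph) (S : Set G.Part) : Hom G classifier where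
  partMap
    | .inl v => .inl (.inl v ∈ S)
    | .inr e => .inr ((G.ψ e).map (fun v => .inl v ∈ S), .inr e ∈ S)
  vertMap v := .inl v ∈ S
  partMap_vert _ := rfl
  incid_partMap
    | .inl _ => rfl
    | .inr _ => rfl

theorem Hom.indicator_injective (G : Multigraph) : Function.Injective (Hom.indicator G) := by
  intro S T hST
  ext p
  have hp := congrFun (congrArg Hom.partMap hST) p
  rcases p with v | e
  · exact Iff.of_eq (Sum.inl_injective hp)
  · exact Iff.of_eq (congrArg Prod.snd (Sum.inr_injective hp))

theorem Hom.indicator_comp_eq_of_range_subset (f : Hom G H) {S : Set H.Part}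
    (hS : Set.range f.partMap ⊆ S) :
    (indicator H S).comp f = (indicator H Set.univ).comp f := by
  have hvert : ∀ x, (Sum.inl (f.vertMap x) ∈ S) = True :=
    fun x => eq_true (hS ⟨.inl x, f.partMap_vert x⟩)
  apply Hom.partMap_injective
  funext p
  have hp : f.partMap p ∈ S := hS ⟨p, rfl⟩
  have hincid := f.incid_partMap p
  simp only [comp_partMap, Function.comp_apply]
  rcases hfp : f.partMap p with w | e
  · rw [hfp] at hp
    simp only [indicator, eq_true hp, Set.mem_univ]
  · rw [hfp] at hp hincid
    change H.ψ e = _ at hincid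
    simp only [indicator, hincid, Sym2.map_map, Function.comp_def, hvert, Set.mem_univ,
      eq_true hp]

theorem Hom.surjective_of_isEpi (f : Hom G H) (hf : f.IsEpi) :
    Function.Surjective f.partMap := by
  have h := hf _ _ _ (indicator_comp_eq_of_range_subset f subset_rfl)
  exact Set.range_eq_univ.mp (indicator_injective H h)

def walkingEdge : Multigraph where
  V := Bool
  E := Unit
  ψ _ := s(false, true)

def Hom.ofPart (p : G.Part) (x y : G.V) (h : G.incid p = s(x, y)) : Hom walkingEdge G where
  partMap
    | .inl b => .inl (cond b y x)
    | .inr _ => p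
  vertMap b := cond b y x
  partMap_vert _ := rfl
  incid_partMap
    | .inl _ => rfl
    | .inr _ => h

theorem Hom.comp_ofPart_eq (f : Hom G H) {p q : G.Part} {x y x' y' : G.V}
    (hp : G.incid p = s(x, y)) (hq : G.incid q = s(x', y'))
    (hpq : f.partMap p = f.partMap q) (hx : f.vertMap x = f.vertMap x')
    (hy : f.vertMap y = f.vertMap y') :
    f.comp (ofPart p x y hp) = f.comp (ofPart q x' y' hq) := by
  apply Hom.partMap_injective
  funext c
  rcases c with (_ | _) | _ <;> simp [ofPart, f.partMap_vert, hx, hy, hpq]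

theorem Hom.vertMap_injective_of_isMono (f : Hom G H) (hf : f.IsMono) :
    Function.Injective f.vertMap := fun v w hvw =>
  have h := hf _ _ _ (comp_ofPart_eq f (p := .inl v) (q := .inl w) rfl rfl
    (by rw [f.partMap_vert, f.partMap_vert, hvw]) hvw hvw)
  Sum.inl_injective (congrArg (Hom.partMap · (.inr ())) h)

theorem Hom.incid_eq_of_partMap_eq (f : Hom G H) (hf : Function.Injective f.vertMap)
    {p q : G.Part} (hpq : f.partMap p = f.partMap q) : G.incid p = G.incid q :=
  Sym2.map.injective hf <| by rw [← f.incid_partMap, ← f.incid_partMap, hpq]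

theorem Hom.injective_of_isMono (f : Hom G H) (hf : f.IsMono) :
    Function.Injective f.partMap := by
  intro p q hpq
  obtain ⟨⟨x, y⟩, hxy⟩ := Quot.exists_rep (G.incid p)
  have hp : G.incid p = s(x, y) := hxy.symm
  have hq : G.incid q = s(x, y) :=
    (incid_eq_of_partMap_eq f (vertMap_injective_of_isMono f hf) hpq).symm.trans hp
  have h := hf _ _ _ (comp_ofPart_eq f hp hq hpq rfl rfl)
  exact congrArg (Hom.partMap · (.inr ())) h

theorem Hom.isEpi_iff_surjective (f : Hom G H) : f.IsEpi ↔ Function.Surjective f.partMap :=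
  ⟨f.surjective_of_isEpi, f.isEpi_of_surjective⟩

theorem Hom.isMono_iff_injective (f : Hom G H) : f.IsMono ↔ Function.Injective f.partMap :=
  ⟨f.injective_of_isMono, f.isMono_of_injective⟩

end Multigraph

open Multigraph in
/-- In the category **Grphs** of multigraphs with graph morphisms, a morphism is an
epimorphism iff its part-set function is surjective, and a monomorphism iff its
part-set function is injective. -/
theorem grphs_epi_iff_surjective_and_mono_iff_injective
    (A B : Multigraph) (f : Hom A B) :
    ((∀ (C : Multigraph) (g h : Hom B C), g.comp f = h.comp f → g = h) ↔
      Function.Surjective f.partMap) ∧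
    ((∀ (C : Multigraph) (g h : Hom C A), f.comp g = f.comp h → g = h) ↔
      Function.Injective f.partMap) :=
  ⟨f.isEpi_iff_surjective, f.isMono_iff_injective⟩
end

section
/- In the category StGrphs of multigraphs with strict graph morphisms, a morphism f : A → B is an epimorphism if and only if its part-set function f_P : P(A) → P(B) is surjective, and f is a monomorphism if and only if f_P is injective. -/
namespace Multigraph

variable {G H : Multigraph}

namespace StrictHom

def IsEpi (f : StrictHom G H) : Prop :=
  ∀ (K : Multigraph) (g h : StrictHom H K), g.comp f = h.comp f → g = h

def IsMono (f : StrictHom G H) : Prop :=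
  ∀ (K : Multigraph) (g h : StrictHom K G), f.comp g = f.comp h → g = h

theorem partMap_eq_sumMap (f : StrictHom G H) : f.partMap = Sum.map f.vertMap f.edgeMap := by
  funext p
  cases p with
  | inl v => exact f.partMap_vert v
  | inr e => exact f.partMap_edge e

theorem ext_partMap {f g : StrictHom G H} (h : f.partMap = g.partMap) : f = g := by
  ext p
  · exact congrFun h p
  · have hp := congrFun h (.inl p)
    rwa [f.partMap_vert, g.partMap_vert, Sum.inl.injEq] at hp
  · have hp := congrFun h (.inr p)
    rwa [f.partMap_edge, g.partMap_edge, Sum.inr.injEq] at hp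

theorem ψ_edgeMap (f : StrictHom G H) (e : G.E) : H.ψ (f.edgeMap e) = (G.ψ e).map f.vertMap := by
  simpa [incid, f.partMap_edge] using f.incid_partMap (.inr e)

theorem surjective_partMap_iff (f : StrictHom G H) :
    Function.Surjective f.partMap ↔
      Function.Surjective f.vertMap ∧ Function.Surjective f.edgeMap := by
  rw [partMap_eq_sumMap, Sum.map_surjective]

theorem injective_partMap_iff (f : StrictHom G H) :
    Function.Injective f.partMap ↔
      Function.Injective f.vertMap ∧ Function.Injective f.edgeMap := by
  rw [partMap_eq_sumMap, Sum.map_injective]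

end StrictHom

abbrev labelled (X Y : Type) : Multigraph where
  V := X
  E := Sym2 X × Y
  ψ := Prod.fst

def discrete (X : Type) : Multigraph where
  V := X
  E := Empty
  ψ := Empty.elim

def edgeOn (X : Type) (s : Sym2 X) : Multigraph where
  V := X
  E := Unit
  ψ := fun _ => s

namespace StrictHom

def toLabelled {X Y : Type} (φ : G.V → X) (ℓ : G.E → Y) : StrictHom G (labelled X Y) where
  partMap := Sum.map φ fun e => ((G.ψ e).map φ, ℓ e)
  vertMap := φ
  partMap_vert _ := rfl
  incid_partMap p := by cases p <;> rfl
  edgeMap e := ((G.ψ e).map φ, ℓ e)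
  partMap_edge _ := rfl

theorem toLabelled_comp {X Y : Type} (φ : H.V → X) (ℓ : H.E → Y) (f : StrictHom G H) :
    (toLabelled φ ℓ).comp f = toLabelled (φ ∘ f.vertMap) (ℓ ∘ f.edgeMap) := by
  apply ext_partMap
  funext p
  cases p with
  | inl v => simp [comp, Hom.comp, toLabelled, f.partMap_vert]
  | inr e => simp [comp, Hom.comp, toLabelled, f.partMap_edge, ψ_edgeMap, Sym2.map_map]

def ofDiscrete {X : Type} (φ : X → G.V) : StrictHom (discrete X) G where
  partMap := Sum.map φ Empty.elim
  vertMap := φ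
  partMap_vert _ := rfl
  incid_partMap p := by
    cases p with
    | inl x => rfl
    | inr e => exact e.elim
  edgeMap := Empty.elim
  partMap_edge _ := rfl

theorem comp_ofDiscrete {X : Type} (f : StrictHom G H) (φ : X → G.V) :
    f.comp (ofDiscrete φ) = ofDiscrete (f.vertMap ∘ φ) := by
  apply ext_partMap
  funext p
  cases p with
  | inl x => exact f.partMap_vert (φ x)
  | inr e => exact e.elim

def ofEdge {X : Type} {s : Sym2 X} (φ : X → G.V) (e : G.E) (h : G.ψ e = s.map φ) :
    StrictHom (edgeOn X s) G where
  partMap := Sum.map φ fun _ => e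
  vertMap := φ
  partMap_vert _ := rfl
  incid_partMap p := by
    cases p with
    | inl x => rfl
    | inr _ => exact h
  edgeMap _ := e
  partMap_edge _ := rfl

theorem comp_ofEdge {X : Type} {s : Sym2 X} (f : StrictHom G H) (φ : X → G.V) (e : G.E)
    (h : G.ψ e = s.map φ) :
    f.comp (ofEdge φ e h) =
      ofEdge (f.vertMap ∘ φ) (f.edgeMap e) (by rw [ψ_edgeMap, h, Sym2.map_map]) := by
  apply ext_partMap
  funext p
  cases p with
  | inl x => exact f.partMap_vert (φ x)
  | inr _ => exact f.partMap_edge e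

theorem surjective_of_isEpi {f : StrictHom G H} (hf : f.IsEpi) :
    Function.Surjective f.vertMap ∧ Function.Surjective f.edgeMap := by
  have hgh := hf _ (toLabelled (· ∈ Set.range f.vertMap) (· ∈ Set.range f.edgeMap))
    (toLabelled (fun _ => True) (fun _ => True)) (by
      simp only [toLabelled_comp, Function.comp_def, Set.mem_range_self])
  have hv := congrArg (fun g => g.vertMap) hgh
  have he := congrArg (fun g => g.edgeMap) hgh
  exact ⟨fun v => of_eq_true (congrFun hv v),
    fun e => of_eq_true (congrArg Prod.snd (congrFun he e))⟩

theorem injective_vertMap_of_isMono {f : StrictHom G H} (hf : f.IsMono) :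
    Function.Injective f.vertMap := by
  intro v w hvw
  have hgh := hf _ (ofDiscrete fun _ : Unit => v) (ofDiscrete fun _ => w) (by
    simp only [comp_ofDiscrete, Function.comp_def, hvw])
  exact congrFun (congrArg (fun g => g.vertMap) hgh) ()

theorem injective_edgeMap_of_isMono {f : StrictHom G H} (hf : f.IsMono) :
    Function.Injective f.edgeMap := by
  intro e₁ e₂ he
  have hψ : G.ψ e₂ = (G.ψ e₁).map _root_.id := by
    rw [Sym2.map_id, id_eq]
    exact Sym2.map.injective (injective_vertMap_of_isMono hf)
      (by rw [← ψ_edgeMap, ← ψ_edgeMap, he])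
  have hgh := hf _ (ofEdge _root_.id e₁ (by rw [Sym2.map_id, id_eq])) (ofEdge _root_.id e₂ hψ)
    (by simp only [comp_ofEdge, he])
  exact congrArg (fun g => g.edgeMap ()) hgh

theorem isEpi_iff_surjective (f : StrictHom G H) : f.IsEpi ↔ Function.Surjective f.partMap := by
  refine ⟨fun hf => f.surjective_partMap_iff.2 (surjective_of_isEpi hf), fun hf K g h hgh => ?_⟩
  exact ext_partMap (hf.injective_comp_right (congrArg (fun k => k.partMap) hgh))

theorem isMono_iff_injective (f : StrictHom G H) : f.IsMono ↔ Function.Injective f.partMap := by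
  refine ⟨fun hf => f.injective_partMap_iff.2
    ⟨injective_vertMap_of_isMono hf, injective_edgeMap_of_isMono hf⟩, fun hf K g h hgh => ?_⟩
  exact ext_partMap (hf.comp_left (congrArg (fun k => k.partMap) hgh))

end StrictHom

end Multigraph

open Multigraph in
/-- In the category **StGrphs** of multigraphs with strict graph morphisms, a morphism is an
epimorphism iff its part-set function is surjective, and a monomorphism iff its
part-set function is injective. -/
theorem stgrphs_epi_iff_surjective_and_mono_iff_injective
    (A B : Multigraph) (f : StrictHom A B) :
    ((∀ (C : Multigraph) (g h : StrictHom B C), g.comp f = h.comp f → g = h) ↔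
      Function.Surjective f.partMap) ∧
    ((∀ (C : Multigraph) (g h : StrictHom C A), f.comp g = f.comp h → g = h) ↔
      Function.Injective f.partMap) :=
  ⟨f.isEpi_iff_surjective, f.isMono_iff_injective⟩
end

section
/- (Fundamental Morphism Theorem in StGrphs) Let f : A → B be a morphism in the category StGrphs of multigraphs with strict graph morphisms. Let q : A → I be a coequalizer of the kernel pair of f, and let q* : I* → B be an equalizer of the cokernel pair of f. Then the unique morphism h : I → I* satisfying q* ∘ h ∘ q = f is an isomorphism. -/
namespace Multigraph

lemma StrictHom.partMap_eq {G H : Multigraph} (f : StrictHom G H) :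
    f.partMap = Sum.map f.vertMap f.edgeMap := by
  funext p
  cases p with
  | inl v => simp [f.partMap_vert]
  | inr e => simp [f.partMap_edge]

lemma StrictHom.ext' {G H : Multigraph} {f g : StrictHom G H}
    (hv : f.vertMap = g.vertMap) (he : f.edgeMap = g.edgeMap) : f = g := by
  have hp : f.partMap = g.partMap := by
    rw [f.partMap_eq, g.partMap_eq, hv, he]
  cases f with
  | mk fh fe hfe =>
    cases g with
    | mk gh ge hge =>
      cases fh; cases gh
      simp_all

lemma StrictHom.ψ_edge {G H : Multigraph} (f : StrictHom G H) (e : G.E) :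
    H.ψ (f.edgeMap e) = Sym2.map f.vertMap (G.ψ e) := by
  have := f.incid_partMap (Sum.inr e)
  rwa [f.partMap_edge, incid, incid] at this

@[simp] lemma StrictHom.comp_vertMap {G H K : Multigraph} (g : StrictHom H K) (f : StrictHom G H) :
    (g.comp f).vertMap = g.vertMap ∘ f.vertMap := rfl

@[simp] lemma StrictHom.comp_edgeMap {G H K : Multigraph} (g : StrictHom H K) (f : StrictHom G H) :
    (g.comp f).edgeMap = g.edgeMap ∘ f.edgeMap := rfl

lemma StrictHom.comp_assoc {G H K L : Multigraph}
    (h : StrictHom K L) (g : StrictHom H K) (f : StrictHom G H) :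
    (h.comp g).comp f = h.comp (g.comp f) :=
  StrictHom.ext' rfl rfl

/-- Constructor for strict morphisms from vertex/edge maps and incidence. -/
def StrictHom.mk'' {G H : Multigraph} (gv : G.V → H.V) (ge : G.E → H.E)
    (hψ : ∀ e, H.ψ (ge e) = Sym2.map gv (G.ψ e)) : StrictHom G H where
  partMap := Sum.map gv ge
  vertMap := gv
  partMap_vert _ := rfl
  incid_partMap p := by
    cases p with
    | inl v => simp [incid]
    | inr e => simpa [incid] using hψ e
  edgeMap := ge
  partMap_edge _ := rfl

@[simp] lemma StrictHom.mk''_vertMap {G H : Multigraph} (gv : G.V → H.V) (ge : G.E → H.E) (hψ) :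
    (StrictHom.mk'' gv ge hψ).vertMap = gv := rfl

@[simp] lemma StrictHom.mk''_edgeMap {G H : Multigraph} (gv : G.V → H.V) (ge : G.E → H.E) (hψ) :
    (StrictHom.mk'' gv ge hψ).edgeMap = ge := rfl

lemma sym2_lift {α β γ : Type*} {g : α → γ} {g' : β → γ} {s : Sym2 α} {t : Sym2 β}
    (h : Sym2.map g s = Sym2.map g' t) :
    ∃ a b c d, s = s(a, b) ∧ t = s(c, d) ∧ g a = g' c ∧ g b = g' d := by
  induction s using Sym2.inductionOn with
  | hf a b =>
    induction t using Sym2.inductionOn with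
    | hf c d =>
      simp only [Sym2.map_pair_eq, Sym2.eq_iff] at h
      rcases h with ⟨h1, h2⟩ | ⟨h1, h2⟩
      · exact ⟨a, b, c, d, rfl, rfl, h1, h2⟩
      · exact ⟨a, b, d, c, rfl, Sym2.eq_swap, h1, h2⟩

/-- The one-point graph. -/
def Pt : Multigraph := ⟨Unit, Empty, Empty.elim⟩

def ptHom (G : Multigraph) (v : G.V) : StrictHom Pt G :=
  StrictHom.mk'' (fun _ => v) Empty.elim (fun e => e.elim)

/-- The single-edge graph. -/
def Seg : Multigraph := ⟨Bool, Unit, fun _ => s(false, true)⟩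

def segHom (G : Multigraph) (u v : G.V) (e : G.E) (he : G.ψ e = s(u, v)) : StrictHom Seg G :=
  StrictHom.mk'' (fun b => bif b then v else u) (fun _ => e)
    (fun _ => by simpa [Seg] using he)

/-- The complete graph with loops on `Bool`. -/
def KB : Multigraph := ⟨Bool, Sym2 Bool, id⟩

def kbHom (G : Multigraph) (g : G.V → Bool) : StrictHom G KB :=
  StrictHom.mk'' g (fun e => Sym2.map g (G.ψ e)) (fun _ => rfl)

lemma kbHom_comp {G H : Multigraph} (g : H.V → Bool) (f : StrictHom G H) :
    (kbHom H g).comp f = kbHom G (g ∘ f.vertMap) :=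
  StrictHom.ext' rfl (by
    funext e
    show Sym2.map g (H.ψ (f.edgeMap e)) = Sym2.map (g ∘ f.vertMap) (G.ψ e)
    rw [f.ψ_edge, Sym2.map_map])

/-- One vertex, two loops. -/
def UB : Multigraph := ⟨Unit, Bool, fun _ => s((), ())⟩

def ubHom (G : Multigraph) (g : G.E → Bool) : StrictHom G UB :=
  StrictHom.mk'' (fun _ => ()) g (fun e => by
    induction G.ψ e using Sym2.inductionOn with
    | hf a b => simp [UB])

lemma ubHom_comp {G H : Multigraph} (g : H.E → Bool) (f : StrictHom G H) :
    (ubHom H g).comp f = ubHom G (g ∘ f.edgeMap) :=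
  StrictHom.ext' (funext fun _ => rfl) rfl

end Multigraph


open Multigraph in
/-- **The Fundamental Morphism Theorem in StGrphs.** Given a morphism `f : A → B`,
a kernel pair `p0, p1 : R → A` of `f` (a pullback of `f` along itself),
a coequalizer `q : A → I` of the kernel pair, a cokernel pair `i0, i1 : B → C`
of `f` (a pushout of `f` along itself), and an equalizer `q* : I* → B` of the
cokernel pair, the unique morphism `h : I → I*` with `q* ∘ h ∘ q = f` is an
isomorphism. -/
theorem fundamentalMorphismTheorem_stgrphs
    (A B : Multigraph) (f : StrictHom A B)
    -- the kernel pair of f : a pullback of f along itself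
    (R : Multigraph) (p0 p1 : StrictHom R A)
    (hker : f.comp p0 = f.comp p1)
    (hkerUniv : ∀ (X : Multigraph) (a b : StrictHom X A), f.comp a = f.comp b →
      ∃! t : StrictHom X R, p0.comp t = a ∧ p1.comp t = b)
    -- q : A → I, a coequalizer of the kernel pair
    (I : Multigraph) (q : StrictHom A I)
    (hq : q.comp p0 = q.comp p1)
    (hqUniv : ∀ (X : Multigraph) (m : StrictHom A X), m.comp p0 = m.comp p1 →
      ∃! t : StrictHom I X, t.comp q = m)
    -- the cokernel pair of f : a pushout of f along itself
    (C : Multigraph) (i0 i1 : StrictHom B C)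
    (hcoker : i0.comp f = i1.comp f)
    (hcokerUniv : ∀ (X : Multigraph) (j0 j1 : StrictHom B X), j0.comp f = j1.comp f →
      ∃! t : StrictHom C X, t.comp i0 = j0 ∧ t.comp i1 = j1)
    -- q* : I* → B, an equalizer of the cokernel pair
    (Istar : Multigraph) (qstar : StrictHom Istar B)
    (hqs : i0.comp qstar = i1.comp qstar)
    (hqsUniv : ∀ (X : Multigraph) (m : StrictHom X B), i0.comp m = i1.comp m →
      ∃! t : StrictHom X Istar, qstar.comp t = m)
    -- the unique comparison morphism h with q* ∘ h ∘ q = f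
    (h : StrictHom I Istar)
    (hcomm : qstar.comp (h.comp q) = f) :
    ∃ hinv : StrictHom Istar I, hinv.comp h = StrictHom.id I ∧ h.comp hinv = StrictHom.id Istar := by
  classical
  -- basic consequences of `hcomm`
  have hcV : ∀ a : A.V, qstar.vertMap (h.vertMap (q.vertMap a)) = f.vertMap a := fun a =>
    congrFun (congrArg (fun s : StrictHom A B => s.vertMap) hcomm) a
  have hcE : ∀ e : A.E, qstar.edgeMap (h.edgeMap (q.edgeMap e)) = f.edgeMap e := fun e =>
    congrFun (congrArg (fun s : StrictHom A B => s.edgeMap) hcomm) e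
  -- q is an epimorphism
  have q_epi : ∀ {Z : Multigraph} (u v : StrictHom I Z), u.comp q = v.comp q → u = v := by
    intro Z u v huv
    have h1 : (u.comp q).comp p0 = (u.comp q).comp p1 := by
      rw [StrictHom.comp_assoc, StrictHom.comp_assoc, hq]
    obtain ⟨t, -, huniq⟩ := hqUniv Z (u.comp q) h1
    rw [huniq u rfl, huniq v huv.symm]
  -- qstar is a monomorphism
  have qs_mono : ∀ {Z : Multigraph} (u v : StrictHom Z Istar),
      qstar.comp u = qstar.comp v → u = v := by
    intro Z u v huv
    have h1 : i0.comp (qstar.comp u) = i1.comp (qstar.comp u) := by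
      rw [← StrictHom.comp_assoc, ← StrictHom.comp_assoc, hqs]
    obtain ⟨t, -, huniq⟩ := hqsUniv Z (qstar.comp u) h1
    rw [huniq u rfl, huniq v huv.symm]
  -- qstar is injective on vertices
  have qsV_inj : Function.Injective qstar.vertMap := by
    intro x y hxy
    have := qs_mono (ptHom Istar x) (ptHom Istar y)
      (StrictHom.ext' (funext fun _ => hxy) (funext fun e => e.elim))
    exact congrFun (congrArg (fun s : StrictHom Pt Istar => s.vertMap) this) ()
  -- qstar is injective on edges
  have qsE_inj : Function.Injective qstar.edgeMap := by
    intro x y hxy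
    have hmap : Sym2.map qstar.vertMap (Istar.ψ x) = Sym2.map qstar.vertMap (Istar.ψ y) := by
      rw [← qstar.ψ_edge, ← qstar.ψ_edge, hxy]
    obtain ⟨a, b, c, d, hs, ht, hac, hbd⟩ := sym2_lift hmap
    have hm : qstar.comp (segHom Istar a b x hs) = qstar.comp (segHom Istar c d y ht) :=
      StrictHom.ext'
        (funext fun bb => by cases bb <;> simpa [segHom] using (by first | exact hac | exact hbd))
        (funext fun _ => hxy)
    have := qs_mono _ _ hm
    exact congrFun (congrArg (fun s : StrictHom Seg Istar => s.edgeMap) this) ()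
  -- kernel-pair surjectivity on vertices
  have kerV : ∀ a a' : A.V, f.vertMap a = f.vertMap a' →
      ∃ r : R.V, p0.vertMap r = a ∧ p1.vertMap r = a' := by
    intro a a' haa
    have hm : f.comp (ptHom A a) = f.comp (ptHom A a') :=
      StrictHom.ext' (funext fun _ => haa) (funext fun e => e.elim)
    obtain ⟨t, ⟨ht0, ht1⟩, -⟩ := hkerUniv Pt (ptHom A a) (ptHom A a') hm
    exact ⟨t.vertMap (),
      congrFun (congrArg (fun s : StrictHom Pt A => s.vertMap) ht0) (),
      congrFun (congrArg (fun s : StrictHom Pt A => s.vertMap) ht1) ()⟩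
  -- kernel-pair surjectivity on edges
  have kerE : ∀ e e' : A.E, f.edgeMap e = f.edgeMap e' →
      ∃ r : R.E, p0.edgeMap r = e ∧ p1.edgeMap r = e' := by
    intro e e' hee
    have hmap : Sym2.map f.vertMap (A.ψ e) = Sym2.map f.vertMap (A.ψ e') := by
      rw [← f.ψ_edge, ← f.ψ_edge, hee]
    obtain ⟨a, b, c, d, hs, ht, hac, hbd⟩ := sym2_lift hmap
    have hm : f.comp (segHom A a b e hs) = f.comp (segHom A c d e' ht) :=
      StrictHom.ext'
        (funext fun bb => by cases bb <;> simpa [segHom] using (by first | exact hac | exact hbd))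
        (funext fun _ => hee)
    obtain ⟨t, ⟨ht0, ht1⟩, -⟩ := hkerUniv Seg _ _ hm
    exact ⟨t.edgeMap (),
      congrFun (congrArg (fun s : StrictHom Seg A => s.edgeMap) ht0) (),
      congrFun (congrArg (fun s : StrictHom Seg A => s.edgeMap) ht1) ()⟩
  -- q is surjective on vertices
  have qV_surj : Function.Surjective q.vertMap := by
    intro i
    by_contra hns
    push_neg at hns
    have hm : (kbHom I (fun _ => true)).comp q =
        (kbHom I (fun v => if ∃ a, q.vertMap a = v then true else false)).comp q := by
      rw [kbHom_comp, kbHom_comp]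
      congr 1
      funext a
      simp [Function.comp]
    have := q_epi _ _ hm
    have hv : true = (if ∃ a, q.vertMap a = i then true else false) :=
      congrFun (congrArg (fun s : StrictHom I KB => s.vertMap) this) i
    rw [if_neg (not_exists.mpr hns)] at hv
    exact Bool.noConfusion hv
  -- q is surjective on edges
  have qE_surj : Function.Surjective q.edgeMap := by
    intro i
    by_contra hns
    push_neg at hns
    have hm : (ubHom I (fun _ => true)).comp q =
        (ubHom I (fun e => if ∃ a, q.edgeMap a = e then true else false)).comp q := by
      rw [ubHom_comp, ubHom_comp]
      congr 1
      funext a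
      simp [Function.comp]
    have := q_epi _ _ hm
    have hv : true = (if ∃ a, q.edgeMap a = i then true else false) :=
      congrFun (congrArg (fun s : StrictHom I UB => s.edgeMap) this) i
    rw [if_neg (not_exists.mpr hns)] at hv
    exact Bool.noConfusion hv
  -- every vertex equalized by i0, i1 is in the image of f
  have cokerV : ∀ b : B.V, i0.vertMap b = i1.vertMap b → ∃ a, f.vertMap a = b := by
    intro b hb
    by_contra hns
    push_neg at hns
    have hm : (kbHom B (fun _ => true)).comp f =
        (kbHom B (fun v => if ∃ a, f.vertMap a = v then true else false)).comp f := by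
      rw [kbHom_comp, kbHom_comp]
      congr 1
      funext a
      simp [Function.comp]
    obtain ⟨t, ⟨ht0, ht1⟩, -⟩ := hcokerUniv KB _ _ hm
    have h0 : t.vertMap (i0.vertMap b) = true :=
      congrFun (congrArg (fun s : StrictHom B KB => s.vertMap) ht0) b
    have h1 : t.vertMap (i1.vertMap b) = (if ∃ a, f.vertMap a = b then true else false) :=
      congrFun (congrArg (fun s : StrictHom B KB => s.vertMap) ht1) b
    rw [hb, h1, if_neg (not_exists.mpr hns)] at h0
    exact Bool.noConfusion h0
  -- every edge equalized by i0, i1 is in the image of f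
  have cokerE : ∀ b : B.E, i0.edgeMap b = i1.edgeMap b → ∃ a, f.edgeMap a = b := by
    intro b hb
    by_contra hns
    push_neg at hns
    have hm : (ubHom B (fun _ => true)).comp f =
        (ubHom B (fun e => if ∃ a, f.edgeMap a = e then true else false)).comp f := by
      rw [ubHom_comp, ubHom_comp]
      congr 1
      funext a
      simp [Function.comp]
    obtain ⟨t, ⟨ht0, ht1⟩, -⟩ := hcokerUniv UB _ _ hm
    have h0 : t.edgeMap (i0.edgeMap b) = true :=
      congrFun (congrArg (fun s : StrictHom B UB => s.edgeMap) ht0) b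
    have h1 : t.edgeMap (i1.edgeMap b) = (if ∃ a, f.edgeMap a = b then true else false) :=
      congrFun (congrArg (fun s : StrictHom B UB => s.edgeMap) ht1) b
    rw [hb, h1, if_neg (not_exists.mpr hns)] at h0
    exact Bool.noConfusion h0
  -- h is bijective on vertices
  have hqsV : ∀ x : Istar.V, i0.vertMap (qstar.vertMap x) = i1.vertMap (qstar.vertMap x) :=
    fun x => congrFun (congrArg (fun s : StrictHom Istar C => s.vertMap) hqs) x
  have hqsE : ∀ x : Istar.E, i0.edgeMap (qstar.edgeMap x) = i1.edgeMap (qstar.edgeMap x) :=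
    fun x => congrFun (congrArg (fun s : StrictHom Istar C => s.edgeMap) hqs) x
  have hV_bij : Function.Bijective h.vertMap := by
    constructor
    · intro x y hxy
      obtain ⟨a, rfl⟩ := qV_surj x
      obtain ⟨a', rfl⟩ := qV_surj y
      have : f.vertMap a = f.vertMap a' := by rw [← hcV, ← hcV, hxy]
      obtain ⟨r, hr0, hr1⟩ := kerV a a' this
      have := congrFun (congrArg (fun s : StrictHom R I => s.vertMap) hq) r
      simpa [hr0, hr1] using this
    · intro x
      obtain ⟨a, ha⟩ := cokerV (qstar.vertMap x) (hqsV x)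
      exact ⟨q.vertMap a, qsV_inj (by rw [hcV, ha])⟩
  have hE_bij : Function.Bijective h.edgeMap := by
    constructor
    · intro x y hxy
      obtain ⟨a, rfl⟩ := qE_surj x
      obtain ⟨a', rfl⟩ := qE_surj y
      have : f.edgeMap a = f.edgeMap a' := by rw [← hcE, ← hcE, hxy]
      obtain ⟨r, hr0, hr1⟩ := kerE a a' this
      have := congrFun (congrArg (fun s : StrictHom R I => s.edgeMap) hq) r
      simpa [hr0, hr1] using this
    · intro x
      obtain ⟨a, ha⟩ := cokerE (qstar.edgeMap x) (hqsE x)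
      exact ⟨q.edgeMap a, qsE_inj (by rw [hcE, ha])⟩
  -- construct the inverse
  let eV : I.V ≃ Istar.V := Equiv.ofBijective h.vertMap hV_bij
  let eE : I.E ≃ Istar.E := Equiv.ofBijective h.edgeMap hE_bij
  have heV : ∀ v, eV v = h.vertMap v := fun _ => rfl
  have heE : ∀ e, eE e = h.edgeMap e := fun _ => rfl
  have hψinv : ∀ e' : Istar.E, I.ψ (eE.symm e') = Sym2.map eV.symm (Istar.ψ e') := by
    intro e'
    have h1 : Istar.ψ e' = Sym2.map h.vertMap (I.ψ (eE.symm e')) := by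
      conv_lhs => rw [← eE.apply_symm_apply e', heE]
      exact h.ψ_edge _
    rw [h1, Sym2.map_map]
    have hid : (eV.symm ∘ h.vertMap : I.V → I.V) = id := funext fun v => eV.symm_apply_apply v
    rw [hid, Sym2.map_id]
    rfl
  refine ⟨StrictHom.mk'' eV.symm eE.symm hψinv, ?_, ?_⟩
  · exact StrictHom.ext'
      (funext fun v => eV.symm_apply_apply v)
      (funext fun e => eE.symm_apply_apply e)
  · exact StrictHom.ext'
      (funext fun v => eV.apply_symm_apply v)
      (funext fun e => eE.apply_symm_apply e)
end

section
/- Let f : A → B be a graph morphism between multigraphs. On the set P(B) ⊔ P(B) (the part set of the coproduct B + B, with coprojections i₀ and i₁), let ~ be the equivalence relation generated by the relation that identifies i₀(f_P(a)) with i₁(f_P(a)) for every a ∈ P(A). Then for every part e ∈ P(B), i₀(e) ~ i₁(e) holds if and only if e lies in the image of f_P. Consequently, the equalizer of the cokernel pair of f in Grphs is the inclusion of the image subgraph of f into B. -/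
/-!
`inl b ~ inr b` forces `b` into the image of `f`: the map `inl b ↦ (b, True)`,
`inr b ↦ (b, b ∈ range f)` is constant on the generating pairs, hence on the classes of `~`.

The image of `f` is closed under taking endpoints of edges, so it is the part set of a subgraph
of `B`, through which every morphism into `B` landing in the image factors uniquely. It is also
exactly where `i₀` and `i₁` agree: marking each part of `B` by whether it lies in the image is a
morphism into a graph of propositions that agrees after `f` with the constant marking `True`, so
the two factor through the cokernel pair, and every part on which `i₀` and `i₁` agree is marked
`True`.
-/

theorem Relation.eqvGen_inl_inr_iff_mem_range {ι α : Type*} (g : ι → α) (b : α) :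
    Relation.EqvGen (fun x y : α ⊕ α => ∃ i, x = .inl (g i) ∧ y = .inr (g i))
      (.inl b) (.inr b) ↔ b ∈ Set.range g := by
  refine ⟨fun h => ?_, fun ⟨i, hi⟩ => .rel _ _ ⟨i, by rw [hi], by rw [hi]⟩⟩
  let φ : α ⊕ α → α × Prop := Sum.elim (fun b => (b, True)) (fun b => (b, b ∈ Set.range g))
  have hb : φ (.inl b) = φ (.inr b) :=
    Setoid.eqvGen_le (s := Setoid.ker φ) (by rintro _ _ ⟨i, rfl, rfl⟩; simp [φ, Setoid.ker_def]) h
  simpa [φ] using (congrArg Prod.snd hb).symm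

namespace Multigraph

theorem Hom.ext_of_partMap {G H : Multigraph} {g h : Hom G H} (hp : g.partMap = h.partMap) :
    g = h :=
  Hom.ext hp <| funext fun v => Sum.inl_injective <| by
    rw [← g.partMap_vert, ← h.partMap_vert, hp]

theorem Hom.comp_eq_comp_iff {G H K : Multigraph} {g h : Hom H K} {m : Hom G H} :
    g.comp m = h.comp m ↔ ∀ p, g.partMap (m.partMap p) = h.partMap (m.partMap p) :=
  ⟨fun hgh p => congrFun (congrArg Hom.partMap hgh) p, fun hgh => Hom.ext_of_partMap (funext hgh)⟩

theorem Hom.cancel_left_of_injective {G H K : Multigraph} {ι : Hom H K}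
    (hι : Function.Injective ι.partMap) {t t' : Hom G H} (h : ι.comp t = ι.comp t') : t = t' :=
  Hom.ext_of_partMap <| funext fun p => hι <| congrFun (congrArg Hom.partMap h) p

theorem Hom.incid_partMap_edge {G H : Multigraph} (f : Hom G H) {a : G.E} {e : H.E}
    (h : f.partMap (.inr a) = .inr e) : H.ψ e = (G.ψ a).map f.vertMap := by
  simpa [h, incid] using f.incid_partMap (.inr a)

def IncidenceClosed (G : Multigraph) (S : Set G.Part) : Prop :=
  ∀ e, Sum.inr e ∈ S → ∀ v ∈ G.ψ e, Sum.inl v ∈ S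

theorem incidenceClosed_range {G H : Multigraph} (f : Hom G H) :
    H.IncidenceClosed (Set.range f.partMap) := by
  rintro e ⟨p | a, hp⟩ v hv
  · simp [f.partMap_vert] at hp
  · rw [f.incid_partMap_edge hp, Sym2.mem_map] at hv
    obtain ⟨u, -, rfl⟩ := hv
    exact ⟨.inl u, f.partMap_vert u⟩

section Induce

variable {G : Multigraph} {S : Set G.Part} (hS : G.IncidenceClosed S)

abbrev induce : Multigraph where
  V := {v // Sum.inl v ∈ S}
  E := {e // Sum.inr e ∈ S}
  ψ e := (G.ψ e.1).attachWith (hS e.1 e.2)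

def induceHom : Hom (induce hS) G where
  partMap := Sum.map Subtype.val Subtype.val
  vertMap := Subtype.val
  partMap_vert _ := rfl
  incid_partMap
    | .inl _ => rfl
    | .inr e => (Sym2.attachWith_map_subtypeVal (hS e.1 e.2)).symm

theorem induceHom_injective : Function.Injective (induceHom hS).partMap :=
  Sum.map_injective.2 ⟨Subtype.val_injective, Subtype.val_injective⟩

def restrictPart : (p : G.Part) → p ∈ S → (induce hS).Part
  | .inl v, hv => .inl ⟨v, hv⟩
  | .inr e, he => .inr ⟨e, he⟩

theorem induceHom_restrictPart {p : G.Part} (hp : p ∈ S) :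
    (induceHom hS).partMap (restrictPart hS p hp) = p := by
  cases p <;> rfl

theorem range_induceHom : Set.range (induceHom hS).partMap = S := by
  refine Set.Subset.antisymm ?_ fun p hp => ⟨restrictPart hS p hp, induceHom_restrictPart hS hp⟩
  rintro _ ⟨v | e, rfl⟩
  exacts [v.2, e.2]

def Hom.codRestrict {X : Multigraph} (m : Hom X G) (hm : ∀ p, m.partMap p ∈ S) :
    Hom X (induce hS) where
  partMap p := restrictPart hS (m.partMap p) (hm p)
  vertMap x := ⟨m.vertMap x, m.partMap_vert x ▸ hm (.inl x)⟩
  partMap_vert x := induceHom_injective hS <| by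
    rw [induceHom_restrictPart]; exact m.partMap_vert x
  incid_partMap p := Sym2.map.injective Subtype.val_injective <| calc
    _ = G.incid ((induceHom hS).partMap (restrictPart hS _ (hm p))) :=
      ((induceHom hS).incid_partMap _).symm
    _ = (X.incid p).map m.vertMap := by rw [induceHom_restrictPart, m.incid_partMap]
    _ = _ := by rw [Sym2.map_map]; rfl

theorem induceHom_comp_codRestrict {X : Multigraph} (m : Hom X G) (hm : ∀ p, m.partMap p ∈ S) :
    (induceHom hS).comp (m.codRestrict hS hm) = m :=
  Hom.ext_of_partMap <| funext fun p => induceHom_restrictPart hS (hm p)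

theorem existsUnique_comp_induceHom {X : Multigraph} (m : Hom X G) (hm : ∀ p, m.partMap p ∈ S) :
    ∃! t : Hom X (induce hS), (induceHom hS).comp t = m :=
  ⟨m.codRestrict hS hm, induceHom_comp_codRestrict hS m hm, fun _ ht =>
    Hom.cancel_left_of_injective (induceHom_injective hS) <|
      ht.trans (induceHom_comp_codRestrict hS m hm).symm⟩

end Induce

abbrev propGraph : Multigraph where
  V := Prop
  E := Prop × Sym2 Prop
  ψ := Prod.snd

def markHom (G : Multigraph) (S : Set G.Part) : Hom G propGraph where
  partMap
    | .inl v => .inl (Sum.inl v ∈ S)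
    | .inr e => .inr (Sum.inr e ∈ S, (G.ψ e).map fun v => Sum.inl v ∈ S)
  vertMap v := Sum.inl v ∈ S
  partMap_vert _ := rfl
  incid_partMap p := by cases p <;> rfl

theorem markHom_partMap_eq_univ_iff {G : Multigraph} {S : Set G.Part} (hS : G.IncidenceClosed S)
    (p : G.Part) : (G.markHom S).partMap p = (G.markHom Set.univ).partMap p ↔ p ∈ S := by
  cases p with
  | inl v => simp [markHom]
  | inr e =>
    simp only [markHom, Set.mem_univ, Sum.inr.injEq, Prod.mk.injEq, eq_iff_iff, iff_true,
      and_iff_left_iff_imp]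
    exact fun he => Sym2.map_congr fun v hv => eq_true (hS e he v hv)

theorem mem_range_of_isPushout {A B C : Multigraph} (f : Hom A B) {i0 i1 : Hom B C}
    (hpush : ∀ (X : Multigraph) (j0 j1 : Hom B X), j0.comp f = j1.comp f →
      ∃! t : Hom C X, t.comp i0 = j0 ∧ t.comp i1 = j1)
    {b : B.Part} (hb : i0.partMap b = i1.partMap b) : b ∈ Set.range f.partMap := by
  have hS := incidenceClosed_range f
  have hmark : (B.markHom (Set.range f.partMap)).comp f = (B.markHom Set.univ).comp f :=
    Hom.comp_eq_comp_iff.2 fun a => (markHom_partMap_eq_univ_iff hS _).2 ⟨a, rfl⟩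
  obtain ⟨t, ⟨ht0, ht1⟩, -⟩ := hpush _ _ _ hmark
  rw [← markHom_partMap_eq_univ_iff hS, ← ht0, ← ht1]
  exact congrArg t.partMap hb

end Multigraph

open Multigraph in
/-- For a graph morphism `f : A → B`, on the part set of the coproduct `B + B`
(with coprojections `Sum.inl` and `Sum.inr`), the equivalence relation generated by
identifying `inl (f a)` with `inr (f a)` for every part `a` of `A` relates `inl e`
and `inr e` exactly when `e` lies in the image of `f` on part sets.  Consequently,
the equalizer of the cokernel pair of `f` in **Grphs** is the inclusion of the image
subgraph of `f` into `B`: there is an injective morphism `ι : M → B` whose range on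
part sets is the range of `f`, and any such morphism equalizes the cokernel pair and
satisfies the universal property of the equalizer. -/
theorem cokernelPair_equalizer_is_image
    (A B : Multigraph) (f : Hom A B) :
    (∀ e : B.Part,
        Relation.EqvGen
          (fun x y : B.Part ⊕ B.Part =>
            ∃ a : A.Part, x = Sum.inl (f.partMap a) ∧ y = Sum.inr (f.partMap a))
          (Sum.inl e) (Sum.inr e) ↔
        e ∈ Set.range f.partMap) ∧
    (∀ (C : Multigraph) (i0 i1 : Hom B C),
        i0.comp f = i1.comp f →
        (∀ (X : Multigraph) (j0 j1 : Hom B X), j0.comp f = j1.comp f →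
          ∃! t : Hom C X, t.comp i0 = j0 ∧ t.comp i1 = j1) →
        ∃ (M : Multigraph) (ι : Hom M B),
          Function.Injective ι.partMap ∧
          Set.range ι.partMap = Set.range f.partMap ∧
          i0.comp ι = i1.comp ι ∧
          ∀ (X : Multigraph) (m : Hom X B), i0.comp m = i1.comp m →
            ∃! t : Hom X M, ι.comp t = m) := by
  refine ⟨Relation.eqvGen_inl_inr_iff_mem_range f.partMap, ?_⟩
  intro C i0 i1 hcomp hpush
  have hequal : ∀ b, i0.partMap b = i1.partMap b ↔ b ∈ Set.range f.partMap := fun b =>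
    ⟨mem_range_of_isPushout f hpush, by rintro ⟨a, rfl⟩; exact Hom.comp_eq_comp_iff.1 hcomp a⟩
  have hS := incidenceClosed_range f
  refine ⟨induce hS, induceHom hS, induceHom_injective hS, range_induceHom hS, ?_, ?_⟩
  · exact Hom.comp_eq_comp_iff.2 fun p => (hequal _).2 <| (range_induceHom hS).subset ⟨p, rfl⟩
  · intro X m hm
    exact existsUnique_comp_induceHom hS m fun p => (hequal _).1 (Hom.comp_eq_comp_iff.1 hm p)
end

section
/- Let f : A → B be a graph morphism between multigraphs. Define a relation r on P(A) as follows: for parts a, b ∈ P(A) with (extended) incidences ψ_A(a) = {u₁, u₂} and ψ_A(b) = {w₁, w₂}, set r a b if and only if f_P(a) = f_P(b) and the endpoints can be matched, i.e. (f_P(u₁) = f_P(w₁) and f_P(u₂) = f_P(w₂)) or (f_P(u₁) = f_P(w₂) and f_P(u₂) = f_P(w₁)). Then for all a, b ∈ P(A), the equivalence relation generated by r relates a and b if and only if f_P(a) = f_P(b). Consequently, the coequalizer of the kernel pair of f in Grphs identifies two parts of A exactly when they lie in the same fiber of f_P. -/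
namespace Multigraph

theorem sym2_rep {α : Type*} (z : Sym2 α) : ∃ x y, z = s(x, y) := by
  induction z using Sym2.ind with
  | _ x y => exact ⟨x, y, rfl⟩

theorem map_incid_eq {A B : Multigraph} (f : Hom A B) {a b : A.Part}
    (h : f.partMap a = f.partMap b) :
    (A.incid a).map f.vertMap = (A.incid b).map f.vertMap := by
  rw [← f.incid_partMap, ← f.incid_partMap, h]

/-- The graph with one edge joining two vertices. -/
def edgeGraph : Multigraph := ⟨Bool, Unit, fun _ => s(false, true)⟩

/-- The morphism from the edge graph to `A` picking out a part `a` with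
incidence `s(u1, u2)`. -/
def toPart (A : Multigraph) (a : A.Part) (u1 u2 : A.V) (h : A.incid a = s(u1, u2)) :
    Hom edgeGraph A where
  partMap := fun p => match p with
    | Sum.inl false => Sum.inl u1
    | Sum.inl true => Sum.inl u2
    | Sum.inr _ => a
  vertMap := fun b => match b with
    | false => u1
    | true => u2
  partMap_vert := fun v => by cases v <;> rfl
  incid_partMap := fun p => by
    cases p with
    | inl v => cases v <;> rfl
    | inr e => exact h

@[simp] theorem toPart_partMap_edge (A : Multigraph) (a : A.Part) (u1 u2 : A.V)
    (h : A.incid a = s(u1, u2)) : (toPart A a u1 u2 h).partMap (Sum.inr ()) = a := rfl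

end Multigraph

open Multigraph in
/-- For a graph morphism `f : A → B`, let `r` relate parts `a, b` of `A` when
`f a = f b` and the endpoints of `a` and `b` can be matched under `f` (i.e. the
images under `f` of their extended incidences agree as unordered pairs).  Then the
equivalence relation generated by `r` relates `a` and `b` iff `f a = f b`.
Consequently, the coequalizer of the kernel pair of `f` in **Grphs** identifies two
parts of `A` exactly when they lie in the same fiber of `f` on part sets. -/
theorem kernelPair_coequalizer_identifies_fibers
    (A B : Multigraph) (f : Hom A B) :
    (∀ a b : A.Part,
        Relation.EqvGen
          (fun a b : A.Part =>
            f.partMap a = f.partMap b ∧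
              (A.incid a).map f.vertMap = (A.incid b).map f.vertMap)
          a b ↔
        f.partMap a = f.partMap b) ∧
    (∀ (R : Multigraph) (p0 p1 : Hom R A),
        f.comp p0 = f.comp p1 →
        (∀ (X : Multigraph) (u v : Hom X A), f.comp u = f.comp v →
          ∃! t : Hom X R, p0.comp t = u ∧ p1.comp t = v) →
        ∀ (I : Multigraph) (q : Hom A I),
          q.comp p0 = q.comp p1 →
          (∀ (X : Multigraph) (m : Hom A X), m.comp p0 = m.comp p1 →
            ∃! t : Hom I X, t.comp q = m) →
          ∀ a b : A.Part, q.partMap a = q.partMap b ↔ f.partMap a = f.partMap b) := by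
  constructor
  · intro a b
    constructor
    · intro h
      induction h with
      | rel _ _ h => exact h.1
      | refl => rfl
      | symm _ _ _ ih => exact ih.symm
      | trans _ _ _ _ _ ih1 ih2 => exact ih1.trans ih2
    · intro h
      exact Relation.EqvGen.rel _ _ ⟨h, map_incid_eq f h⟩
  · intro R p0 p1 hkp hker I q hq hcoeq a b
    constructor
    · intro hqab
      obtain ⟨t, ht, -⟩ := hcoeq B f hkp
      have h1 := congrFun (congrArg Hom.partMap ht) a
      have h2 := congrFun (congrArg Hom.partMap ht) b
      rw [← h1, ← h2]
      show t.partMap (q.partMap a) = t.partMap (q.partMap b)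
      rw [hqab]
    · intro hf
      obtain ⟨u1, u2, hu⟩ := sym2_rep (A.incid a)
      obtain ⟨w1, w2, hw⟩ := sym2_rep (A.incid b)
      have hm := map_incid_eq f hf
      rw [hu, hw, Sym2.map_pair_eq, Sym2.map_pair_eq, Sym2.eq_iff] at hm
      have key : ∀ (v : Hom edgeGraph A), v.partMap (Sum.inr ()) = b →
          f.comp (toPart A a u1 u2 hu) = f.comp v →
          q.partMap a = q.partMap b := by
        intro v hv hfc
        obtain ⟨t, ⟨ht0, ht1⟩, -⟩ := hker edgeGraph (toPart A a u1 u2 hu) v hfc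
        have e0 := congrFun (congrArg Hom.partMap ht0) (Sum.inr ())
        have e1 := congrFun (congrArg Hom.partMap ht1) (Sum.inr ())
        have hq' := congrFun (congrArg Hom.partMap hq) (t.partMap (Sum.inr ()))
        calc q.partMap a
            = q.partMap ((p0.comp t).partMap (Sum.inr ())) := by rw [e0]; rfl
          _ = q.partMap ((p1.comp t).partMap (Sum.inr ())) := hq'
          _ = q.partMap b := by rw [e1, hv]
      rcases hm with ⟨h1, h2⟩ | ⟨h1, h2⟩
      · refine key (toPart A b w1 w2 hw) rfl ?_
        apply Hom.ext
        · funext p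
          rcases p with b' | e
          · cases b'
            · show f.partMap (Sum.inl u1) = f.partMap (Sum.inl w1)
              rw [f.partMap_vert, f.partMap_vert, h1]
            · show f.partMap (Sum.inl u2) = f.partMap (Sum.inl w2)
              rw [f.partMap_vert, f.partMap_vert, h2]
          · exact hf
        · funext b'
          cases b'
          · exact h1
          · exact h2
      · refine key (toPart A b w2 w1 (by rw [hw, Sym2.eq_swap])) rfl ?_
        apply Hom.ext
        · funext p
          rcases p with b' | e
          · cases b'
            · show f.partMap (Sum.inl u1) = f.partMap (Sum.inl w2)
              rw [f.partMap_vert, f.partMap_vert, h1]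
            · show f.partMap (Sum.inl u2) = f.partMap (Sum.inl w1)
              rw [f.partMap_vert, f.partMap_vert, h2]
          · exact hf
        · funext b'
          cases b'
          · exact h1
          · exact h2
end

section
/- (Categorical equivalence to edge-reconstructability) Let V and W be finite types, and let G : SimpleGraph V and H : SimpleGraph W be simple graphs, each with at least 4 edges. Suppose there is a bijection σ from the edge set of G to the edge set of H and, for every edge e of G, a graph isomorphism γ_e : (G − e) ≅ (H − σ(e)), where G − e denotes the simple graph on V obtained from G by deleting the edge e. Let D be the disjoint union of the edge-deleted subgraphs, the simple graph on the vertex type Σ (e : E(G)), V whose component indexed by e is G − e, and let Γ : D → H be the graph homomorphism that on the component indexed by e acts as γ_e (viewed as a homomorphism into H, since H − σ(e) has the same vertices as H and fewer edges). Then G is isomorphic to H if and only if there exists a graph homomorphism δ : D → G such that (i) δ is surjective on vertices and every edge of G is the image under δ of some edge of D, and (ii) for all vertices x, y of D, Γ(x) = Γ(y) implies δ(x) = δ(y). -/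
/-- The disjoint union of the single-edge-deleted subgraphs of `G`: the component
indexed by an edge `e` of `G` is `G` with the edge `e` deleted. -/
def SimpleGraph.edgeDeck {V : Type} (G : SimpleGraph V) :
    SimpleGraph (Σ _e : G.edgeSet, V) where
  Adj x y := x.1 = y.1 ∧ (G.deleteEdges {x.1.1}).Adj x.2 y.2
  symm := by
    constructor
    rintro ⟨e, u⟩ ⟨e', v⟩ ⟨h1, h2⟩
    cases h1
    exact ⟨rfl, h2.symm⟩
  loopless := by
    constructor
    rintro ⟨e, u⟩ ⟨-, h2⟩
    exact (G.deleteEdges {e.1}).irrefl h2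

/-- The disjoint union of the single-vertex-deleted subgraphs of `G`: the component
indexed by a vertex `v` of `G` is the induced subgraph of `G` on `{u // u ≠ v}`. -/
def SimpleGraph.vertexDeck {V : Type} (G : SimpleGraph V) :
    SimpleGraph (Σ v : V, {u : V // u ≠ v}) where
  Adj x y := x.1 = y.1 ∧ G.Adj x.2.1 y.2.1
  symm := by
    constructor
    rintro ⟨v, u⟩ ⟨v', u'⟩ ⟨h1, h2⟩
    cases h1
    exact ⟨rfl, h2.symm⟩
  loopless := by
    constructor
    rintro ⟨v, u⟩ ⟨-, h2⟩
    exact G.irrefl h2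

/-!
Both directions rest on the fact that `Γ` is surjective on vertices and on edges: an edge `h`
of `H` is missed by some `σ e` (there are at least two edges), so `h` is an edge of `H − σ e`
and `(γ e)⁻¹` pulls it back to an edge of the component `e` of the deck. Given `G ≃g H`,
`δ` is `Γ` followed by the inverse isomorphism. Conversely, a `δ` coequalizing the kernel pair
of the surjection `Γ` descends to a homomorphism `H →g G` that is surjective on vertices and
edges; as `H` and `G` have equally many vertices, it is a bijection, and a bijective
homomorphism that is surjective on edges is an isomorphism.
-/

namespace SimpleGraph

namespace Hom

variable {U V W : Type*} {D : SimpleGraph U} {G : SimpleGraph V} {H : SimpleGraph W}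

theorem surjective_mapEdgeSet_iff (f : G →g H) :
    Function.Surjective f.mapEdgeSet ↔
      ∀ e ∈ H.edgeSet, ∃ d ∈ G.edgeSet, Sym2.map f d = e := by
  simp [Function.Surjective, Subtype.ext_iff]

theorem mapEdgeSet_comp (f : H →g G) (g : D →g H) :
    (f.comp g).mapEdgeSet = f.mapEdgeSet ∘ g.mapEdgeSet := by
  ext e
  simp [Sym2.map_map]

theorem adj_iff_of_surjective_mapEdgeSet (f : G →g H) (hf : Function.Injective f)
    (hfe : Function.Surjective f.mapEdgeSet) {a b : V} : H.Adj (f a) (f b) ↔ G.Adj a b := by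
  refine ⟨fun h => ?_, f.map_adj⟩
  obtain ⟨⟨d, hd⟩, hde⟩ := hfe ⟨s(f a, f b), h⟩
  have hd_eq : d = s(a, b) := Sym2.map.injective hf (congrArg Subtype.val hde)
  rwa [hd_eq] at hd

noncomputable def isoOfBijective (f : G →g H) (hf : Function.Bijective f)
    (hfe : Function.Surjective f.mapEdgeSet) : G ≃g H :=
  RelIso.ofSurjective ⟨⟨f, hf.1⟩, f.adj_iff_of_surjective_mapEdgeSet hf.1 hfe⟩ hf.2

noncomputable def descend (Γ : D →g H) (hΓ : Function.Surjective Γ)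
    (hΓe : Function.Surjective Γ.mapEdgeSet) (δ : D →g G) (hδ : Function.FactorsThrough δ Γ) :
    H →g G where
  toFun := δ ∘ Function.surjInv hΓ
  map_rel' {w w'} h := by
    obtain ⟨⟨d, hd⟩, hde⟩ := hΓe ⟨s(w, w'), h⟩
    have hcomp : (δ ∘ Function.surjInv hΓ) ∘ Γ = δ :=
      funext fun x => hδ (Function.surjInv_eq hΓ (Γ x))
    have hde' : Sym2.map Γ d = s(w, w') := congrArg Subtype.val hde
    change Sym2.map (δ ∘ Function.surjInv hΓ) s(w, w') ∈ G.edgeSet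
    rw [← hde', Sym2.map_map, hcomp]
    exact δ.map_mem_edgeSet hd

theorem descend_comp (Γ : D →g H) (hΓ : Function.Surjective Γ)
    (hΓe : Function.Surjective Γ.mapEdgeSet) (δ : D →g G) (hδ : Function.FactorsThrough δ Γ) :
    (Γ.descend hΓ hΓe δ hδ).comp Γ = δ :=
  RelHom.ext fun x => hδ (Function.surjInv_eq hΓ (Γ x))

end Hom

section EdgeDeck

variable {V W : Type} {G : SimpleGraph V} {H : SimpleGraph W} (σ : G.edgeSet ≃ H.edgeSet)
  (γ : ∀ e : G.edgeSet, G.deleteEdges {e.1} ≃g H.deleteEdges {(σ e).1})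
  {Γ : G.edgeDeck →g H}

theorem surjective_of_edgeDeck_iso (hΓ : ∀ (e : G.edgeSet) (u : V), Γ ⟨e, u⟩ = γ e u)
    (e : G.edgeSet) : Function.Surjective Γ :=
  fun w => ⟨⟨e, (γ e).symm w⟩, by rw [hΓ, RelIso.apply_symm_apply]⟩

theorem surjective_mapEdgeSet_of_edgeDeck_iso [Nontrivial G.edgeSet]
    (hΓ : ∀ (e : G.edgeSet) (u : V), Γ ⟨e, u⟩ = γ e u) : Function.Surjective Γ.mapEdgeSet := by
  rintro ⟨h, hh⟩
  obtain ⟨e, he⟩ := exists_ne (σ.symm ⟨h, hh⟩)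
  induction h using Sym2.ind with
  | h w w' =>
    have hadj : (H.deleteEdges {(σ e).1}).Adj w w' := by
      refine deleteEdges_adj.2 ⟨hh, fun hw => he ?_⟩
      rw [Equiv.eq_symm_apply]
      exact Subtype.ext (Set.mem_singleton_iff.1 hw).symm
    refine ⟨⟨s(⟨e, (γ e).symm w⟩, ⟨e, (γ e).symm w'⟩), rfl, (γ e).symm.map_adj_iff.2 hadj⟩, ?_⟩
    ext
    simp [hΓ]

end EdgeDeck

end SimpleGraph

open SimpleGraph in
theorem edge_reconstructable_iff_general {V W : Type} [Fintype W]
    (G : SimpleGraph V) (H : SimpleGraph W)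
    (hG : 4 ≤ G.edgeSet.ncard)
    (σ : G.edgeSet ≃ H.edgeSet)
    (γ : ∀ e : G.edgeSet, G.deleteEdges {e.1} ≃g H.deleteEdges {(σ e).1})
    (Γ : G.edgeDeck →g H)
    (hΓ : ∀ (e : G.edgeSet) (u : V), Γ ⟨e, u⟩ = γ e u) :
    Nonempty (G ≃g H) ↔
      ∃ δ : G.edgeDeck →g G,
        (Function.Surjective δ ∧
          ∀ e ∈ G.edgeSet, ∃ d ∈ G.edgeDeck.edgeSet, Sym2.map δ d = e) ∧
        (∀ x y, Γ x = Γ y → δ x = δ y) := by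
  have : Nontrivial G.edgeSet :=
    (Set.one_lt_ncard_iff_nontrivial_and_finite.1 (by omega)).1.coe_sort
  obtain ⟨e₀⟩ : Nonempty G.edgeSet := inferInstance
  have hΓv := surjective_of_edgeDeck_iso σ γ hΓ e₀
  have hΓe := surjective_mapEdgeSet_of_edgeDeck_iso σ γ hΓ
  simp_rw [← Hom.surjective_mapEdgeSet_iff]
  constructor
  · rintro ⟨φ⟩
    refine ⟨φ.symm.toHom.comp Γ, ⟨φ.symm.surjective.comp hΓv, ?_⟩, fun x y h => congrArg φ.symm h⟩
    rw [Hom.mapEdgeSet_comp]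
    exact φ.symm.mapEdgeSet.surjective.comp hΓe
  · rintro ⟨δ, ⟨hδ, hδe⟩, hker⟩
    have hcomp := Hom.descend_comp Γ hΓv hΓe δ hker
    set f := Γ.descend hΓv hΓe δ hker
    rw [← hcomp, Hom.mapEdgeSet_comp] at hδe
    rw [← hcomp, Hom.coe_comp] at hδ
    have hcard : Nat.card W ≤ Nat.card V := (Nat.card_congr (γ e₀).toEquiv).ge
    exact ⟨(f.isoOfBijective (hδ.of_comp.bijective_of_nat_card_le hcard) hδe.of_comp).symm⟩

/-- **Categorical equivalence to edge-reconstructability.**  Given finite simple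
graphs `G` and `H` with at least 4 edges, a bijection `σ` between their edge sets
and isomorphisms `γ e : G − e ≅ H − σ e` of the edge-deleted subgraphs, let `Γ` be
the homomorphism from the disjoint union `D` of the edge-deleted subgraphs of `G`
to `H` which acts as `γ e` on the component indexed by `e`.  Then `G ≅ H` iff there
is a homomorphism `δ : D → G` that is surjective on vertices and edges and that
coequalizes the kernel pair of `Γ` (i.e. `Γ x = Γ y` implies `δ x = δ y`). -/
theorem edge_reconstructable_iff {V W : Type} [Fintype V] [Fintype W]
    (G : SimpleGraph V) (H : SimpleGraph W)
    (hG : 4 ≤ G.edgeSet.ncard) (hH : 4 ≤ H.edgeSet.ncard)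
    (σ : G.edgeSet ≃ H.edgeSet)
    (γ : ∀ e : G.edgeSet, G.deleteEdges {e.1} ≃g H.deleteEdges {(σ e).1})
    (Γ : G.edgeDeck →g H)
    (hΓ : ∀ (e : G.edgeSet) (u : V), Γ ⟨e, u⟩ = γ e u) :
    Nonempty (G ≃g H) ↔
      ∃ δ : G.edgeDeck →g G,
        (Function.Surjective δ ∧
          ∀ e ∈ G.edgeSet, ∃ d ∈ G.edgeDeck.edgeSet, Sym2.map δ d = e) ∧
        (∀ x y, Γ x = Γ y → δ x = δ y) :=
  edge_reconstructable_iff_general G H hG σ γ Γ hΓ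
end
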